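/- Let P^target(b,c|x,z) (b, c, x, z ∈ {0,1}) be a bipartite Bell behavior (nonnegative, ∑_{b,c} P^target(b,c|x,z) = 1 for all x, z) whose marginal ∑_c P^target(b,c|x,z) is independent of z. Then the tripartite behavior P^initial(a,b,c|x,y,z) := (1/2) P^target(b,c| x ⊕ a ⊕ y, z) admits an LHV model across the bipartition AB|C: there exist a finite set Λ, weights P_λ ≥ 0 summing to 1, conditional distributions q_λ(a,b|x,y) (nonnegative, summing to 1 over a, b for each x, y, λ), and conditional distributions r_λ(c|z) (nonnegative, summing to 1 over c for each z, λ), with P^initial(a,b,c|x,y,z) = ∑_λ P_λ q_λ(a,b|x,y) r_λ(c|z) for all inputs and outputs. -/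
import Mathlib


open Matrix BigOperators ComplexOrder

noncomputable section

/-- A tripartite behavior `P a b c x y z` admits an LHV model across the bipartition AB|C. -/
def IsLHV_ABC (P : Fin 2 → Fin 2 → Fin 2 → Fin 2 → Fin 2 → Fin 2 → ℝ) : Prop :=
  ∃ (n : ℕ) (w : Fin n → ℝ) (q : Fin n → Fin 2 → Fin 2 → Fin 2 → Fin 2 → ℝ)
    (r : Fin n → Fin 2 → Fin 2 → ℝ),
    (∀ l, 0 ≤ w l) ∧ (∑ l, w l = 1) ∧
    (∀ l a b x y, 0 ≤ q l a b x y) ∧ (∀ l x y, ∑ a, ∑ b, q l a b x y = 1) ∧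
    (∀ l c z, 0 ≤ r l c z) ∧ (∀ l z, ∑ c, r l c z = 1) ∧
    (∀ a b c x y z, P a b c x y z = ∑ l, w l * q l a b x y * r l c z)

def Mm (Pt : Fin 2 → Fin 2 → Fin 2 → Fin 2 → ℝ) (u b : Fin 2) : ℝ := ∑ c, Pt b c u 0

def gg (Pt : Fin 2 → Fin 2 → Fin 2 → Fin 2 → ℝ) (u b c1 : Fin 2) : ℝ :=
  if Mm Pt u b = 0 then (if c1 = 0 then 1 else 0) else Pt b c1 u 1 / Mm Pt u b

lemma Mm_nonneg (Pt) (hpos : ∀ b c x z, 0 ≤ Pt b c x z) (u b : Fin 2) : 0 ≤ Mm Pt u b :=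
  Finset.sum_nonneg fun c _ => hpos b c u 0

lemma gg_nonneg (Pt) (hpos : ∀ b c x z, 0 ≤ Pt b c x z) (u b c1 : Fin 2) : 0 ≤ gg Pt u b c1 := by
  unfold gg
  split
  · split <;> norm_num
  · exact div_nonneg (hpos _ _ _ _) (Mm_nonneg Pt hpos u b)

lemma gg_sum (Pt) (hns : ∀ b x z z', ∑ c, Pt b c x z = ∑ c, Pt b c x z') (u b : Fin 2) :
    ∑ c1, gg Pt u b c1 = 1 := by
  by_cases h : Mm Pt u b = 0
  · simp [gg, h, Fin.sum_univ_two]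
  · simp only [gg, if_neg h]
    rw [← Finset.sum_div, hns b u 1 0]
    exact div_self h

lemma inner_eq (Pt) (hpos : ∀ b c x z, 0 ≤ Pt b c x z)
    (hns : ∀ b x z z', ∑ c, Pt b c x z = ∑ c, Pt b c x z') (u b c z : Fin 2) :
    ∑ c0, ∑ c1, Pt b c0 u 0 * gg Pt u b c1 * (if c = (if z = 0 then c0 else c1) then (1:ℝ) else 0)
      = Pt b c u z := by
  fin_cases z <;>
    simp only [Fin.zero_eta, Fin.mk_one, eq_self_iff_true, if_true,
      (by decide : ((1:Fin 2) = 0) = False), if_false]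
  · 
    have h1 : ∀ c0 : Fin 2, ∑ c1, Pt b c0 u 0 * gg Pt u b c1 * (if c = c0 then (1:ℝ) else 0)
        = (if c = c0 then (1:ℝ) else 0) * Pt b c0 u 0 := by
      intro c0
      rw [show (∑ c1, Pt b c0 u 0 * gg Pt u b c1 * (if c = c0 then (1:ℝ) else 0))
          = ((if c = c0 then (1:ℝ) else 0) * Pt b c0 u 0) * ∑ c1, gg Pt u b c1 from by
        rw [Finset.mul_sum]; exact Finset.sum_congr rfl fun c1 _ => by ring]
      rw [gg_sum Pt hns, mul_one]
    simp_rw [h1, ite_mul, one_mul, zero_mul, Finset.sum_ite_eq, Finset.mem_univ, if_true]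
  · simp only [mul_ite, mul_one, mul_zero, Finset.sum_ite_eq, Finset.mem_univ, if_true]
    rw [← Finset.sum_mul]
    show Mm Pt u b * gg Pt u b c = Pt b c u 1
    by_cases h : Mm Pt u b = 0
    · rw [h, zero_mul]
      have h1 : ∑ c', Pt b c' u 1 = 0 := by rw [hns b u 1 0]; exact h
      exact ((Finset.sum_eq_zero_iff_of_nonneg (fun c' _ => hpos b c' u 1)).mp h1 c
        (Finset.mem_univ c)).symm
    · rw [gg, if_neg h, mul_div_cancel₀ _ h]

/-- The initial tripartite behavior `(1/2) P^target(b,c|x⊕a⊕y,z)` built from any bipartite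
Bell behavior with z-independent marginal admits an LHV model across AB|C. -/
theorem initial_behavior_is_LHV
    (Pt : Fin 2 → Fin 2 → Fin 2 → Fin 2 → ℝ)
    (hpos : ∀ b c x z, 0 ≤ Pt b c x z)
    (hnorm : ∀ x z, ∑ b, ∑ c, Pt b c x z = 1)
    (hns : ∀ b x z z', ∑ c, Pt b c x z = ∑ c, Pt b c x z') :
    IsLHV_ABC (fun a b c x y z => (1 / 2 : ℝ) * Pt b c (x + a + y) z) := by
  classical
  let E : Fin 2 × Fin 2 × Fin 2 × Fin 2 ≃ Fin 16 :=
    (Equiv.prodCongr (Equiv.refl (Fin 2))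
      ((Equiv.prodCongr (Equiv.refl (Fin 2)) finProdFinEquiv).trans finProdFinEquiv)).trans
      finProdFinEquiv
  refine ⟨16,
    fun l => (1/2 : ℝ) * Pt (E.symm l).2.1 (E.symm l).2.2.1 (E.symm l).1 0 *
      gg Pt (E.symm l).1 (E.symm l).2.1 (E.symm l).2.2.2,
    fun l a b x y => (if a = x + y + (E.symm l).1 then (1:ℝ) else 0) *
      (if b = (E.symm l).2.1 then 1 else 0),
    fun l c z => if c = (if z = 0 then (E.symm l).2.2.1 else (E.symm l).2.2.2) then (1:ℝ) else 0,
    ?_, ?_, ?_, ?_, ?_, ?_, ?_⟩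
  · intro l
    exact mul_nonneg (mul_nonneg (by norm_num) (hpos _ _ _ _)) (gg_nonneg Pt hpos _ _ _)
  · rw [Fintype.sum_equiv E.symm _
      (fun p : Fin 2 × Fin 2 × Fin 2 × Fin 2 =>
        (1/2 : ℝ) * Pt p.2.1 p.2.2.1 p.1 0 * gg Pt p.1 p.2.1 p.2.2.2) (fun l => rfl)]
    simp only [Fintype.sum_prod_type]
    have h1 : ∀ u b c0 : Fin 2, ∑ c1, (1/2 : ℝ) * Pt b c0 u 0 * gg Pt u b c1
        = 1/2 * Pt b c0 u 0 := fun u b c0 => by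
      rw [← Finset.mul_sum, gg_sum Pt hns, mul_one]
    simp_rw [h1, ← Finset.mul_sum, hnorm]
    norm_num [Fin.sum_univ_two]
  · intro l a b x y
    dsimp only
    split_ifs <;> norm_num
  · intro l x y
    simp [Finset.sum_ite_eq', ← Finset.mul_sum]
  · intro l c z
    dsimp only
    split_ifs <;> norm_num
  · intro l z
    simp [Finset.sum_ite_eq']
  · intro a b c x y z
    rw [Fintype.sum_equiv E.symm _
      (fun p : Fin 2 × Fin 2 × Fin 2 × Fin 2 =>
        ((1/2 : ℝ) * Pt p.2.1 p.2.2.1 p.1 0 * gg Pt p.1 p.2.1 p.2.2.2) *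
        ((if a = x + y + p.1 then (1:ℝ) else 0) * (if b = p.2.1 then 1 else 0)) *
        (if c = (if z = 0 then p.2.2.1 else p.2.2.2) then (1:ℝ) else 0)) (fun l => rfl)]
    simp only [Fintype.sum_prod_type]
    have key : ∀ u b0 : Fin 2,
        ∑ c0, ∑ c1, ((1/2 : ℝ) * Pt b0 c0 u 0 * gg Pt u b0 c1) *
          ((if a = x + y + u then (1:ℝ) else 0) * (if b = b0 then 1 else 0)) *
          (if c = (if z = 0 then c0 else c1) then (1:ℝ) else 0)
        = (if a = x + y + u then (1:ℝ) else 0) * (if b = b0 then 1 else 0) *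
          (1/2 * Pt b0 c u z) := by
      intro u b0
      rw [show (∑ c0, ∑ c1, ((1/2 : ℝ) * Pt b0 c0 u 0 * gg Pt u b0 c1) *
          ((if a = x + y + u then (1:ℝ) else 0) * (if b = b0 then 1 else 0)) *
          (if c = (if z = 0 then c0 else c1) then (1:ℝ) else 0))
        = ((if a = x + y + u then (1:ℝ) else 0) * (if b = b0 then 1 else 0) * (1/2)) *
          ∑ c0, ∑ c1, Pt b0 c0 u 0 * gg Pt u b0 c1 *
            (if c = (if z = 0 then c0 else c1) then (1:ℝ) else 0) from by
        rw [Finset.mul_sum]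
        refine Finset.sum_congr rfl fun c0 _ => ?_
        rw [Finset.mul_sum]
        exact Finset.sum_congr rfl fun c1 _ => by ring]
      rw [inner_eq Pt hpos hns u b0 c z]
      ring
    simp_rw [key, mul_assoc, ← Finset.mul_sum, ite_mul, one_mul, zero_mul, Finset.sum_ite_eq,
      Finset.mem_univ, if_true]
    have hu : ∀ a x y u : Fin 2, (a = x + y + u) = (u = x + a + y) := by decide
    simp_rw [hu]
    rw [Finset.sum_ite_eq']
    simp
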